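/- Fix $s > 0$ and $q \ge 2$. Let $X$ be a Banach space satisfying $\rho_X(\tau) \le s\tau^2$ for all $\tau > 0$. Let $Z_1, Z_2, \ldots$ be $X$-valued random variables with $\mathbb{E}[\|Z_n\|^q] < \infty$ for all $n$, and set $S_n = Z_1 + \cdots + Z_n$. Assume $\mathbb{E}[\|S_n - Z_{n+1}\|^q] \ge \mathbb{E}[\|S_n\|^q]$ for all $n$. Then $(\mathbb{E}[\|S_n\|^q])^{1/q} \le 8\sqrt{s+q} \cdot \sqrt{\sum_{j=1}^n (\mathbb{E}[\|Z_j\|^q])^{2/q}}$. -/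

import Mathlib

/-!
Uniform smoothness, applied to the unit vectors along `x` and `y`, sharpens the triangle
inequality to `‖x + y‖ + ‖x - y‖ ≤ 2‖x‖ + 2s‖y‖²/‖x‖`. Together with the convexity of `t ↦ t ^ q`
and the two-point bound `(1 + t) ^ q + (1 - t) ^ q ≤ 2 (1 + 9qt²) ^ (q/2)` this gives the
pointwise inequality `‖x + y‖ ^ q + ‖x - y‖ ^ q ≤ 2 (‖x‖² + K‖y‖²) ^ (q/2)`, `K = 32 (s + q)`.
Put `x = Sₙ`, `y = Zₙ₊₁` and integrate: Minkowski's inequality in `L^(q/2)` and the hypothesis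
`E‖Sₙ‖ ^ q ≤ E‖Sₙ - Zₙ₊₁‖ ^ q` give `E‖Sₙ₊₁‖ ^ q ≤ 2 (a + Kb) ^ (q/2) - a ^ (q/2)` with
`a = ‖Sₙ‖_q²`, `b = ‖Zₙ₊₁‖_q²`, hence by convexity `‖Sₙ₊₁‖_q² ≤ a + 2Kb`. Summing gives the
bound, with `√(2K) = 8√(s + q)`.
-/

open Real MeasureTheory

theorem sq_rpow_div_two {u : ℝ} (hu : 0 ≤ u) (q : ℝ) : (u ^ 2) ^ (q / 2) = u ^ q := by
  rw [← rpow_natCast_mul hu, Nat.cast_ofNat, mul_div_cancel₀ _ two_ne_zero]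

theorem one_add_rpow_le_exp_mul {t q : ℝ} (ht : -1 ≤ t) (hq : 0 ≤ q) :
    (1 + t) ^ q ≤ exp (q * t) := by
  calc (1 + t) ^ q ≤ exp t ^ q :=
        rpow_le_rpow (by linarith) (by linarith [add_one_le_exp t]) hq
    _ = exp (q * t) := by rw [← exp_mul, mul_comm]

theorem one_add_rpow_add_one_sub_rpow_le {q t : ℝ} (hq : 2 ≤ q) (ht₀ : 0 ≤ t) (ht₁ : t ≤ 1) :
    (1 + t) ^ q + (1 - t) ^ q ≤ 2 * (1 + 9 * q * t ^ 2) ^ (q / 2) := by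
  rcases le_or_gt 1 (q * t) with hlarge | hsmall
  · have hsq : (1 + t) ^ q ≤ (1 + 9 * q * t ^ 2) ^ (q / 2) := by
      rw [← sq_rpow_div_two (by linarith : 0 ≤ 1 + t)]
      exact rpow_le_rpow (by positivity) (by nlinarith) (by linarith)
    have hmono : (1 - t) ^ q ≤ (1 + t) ^ q :=
      rpow_le_rpow (by linarith) (by linarith) (by linarith)
    linarith
  · -- second-order Taylor bounds for `exp (± q t)` against Bernoulli's inequality
    have hqt : |q * t| ≤ 1 := by rw [abs_of_nonneg (by positivity)]; exact hsmall.le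
    have hexp₁ := (abs_le.1 (abs_exp_sub_one_sub_id_le hqt)).2
    have hexp₂ := (abs_le.1 (abs_exp_sub_one_sub_id_le (x := -(q * t)) (by rwa [abs_neg]))).2
    have hplus := one_add_rpow_le_exp_mul (t := t) (q := q) (by linarith) (by linarith)
    have hminus := one_add_rpow_le_exp_mul (t := -t) (q := q) (by linarith) (by linarith)
    rw [← sub_eq_add_neg, mul_neg] at hminus
    have hbernoulli : 1 + q / 2 * (9 * q * t ^ 2) ≤ (1 + 9 * q * t ^ 2) ^ (q / 2) :=
      one_add_mul_self_le_rpow_one_add (by nlinarith) (by linarith)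
    nlinarith

theorem add_rpow_add_sub_rpow_le {q m b : ℝ} (hq : 2 ≤ q) (hb : 0 ≤ b) (hbm : b ≤ m) :
    (m + b) ^ q + (m - b) ^ q ≤ 2 * (m ^ 2 + 9 * q * b ^ 2) ^ (q / 2) := by
  obtain rfl | hm := (hb.trans hbm).eq_or_lt
  · obtain rfl : b = 0 := le_antisymm hbm hb
    simp [zero_rpow (by linarith : q ≠ 0), zero_rpow (by linarith : q / 2 ≠ 0)]
  set t := b / m
  have hbt : b = m * t := (mul_div_cancel₀ b hm.ne').symm
  have ht₀ : 0 ≤ t := by positivity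
  have ht₁ : t ≤ 1 := (div_le_one hm).2 hbm
  calc (m + b) ^ q + (m - b) ^ q = (m * (1 + t)) ^ q + (m * (1 - t)) ^ q := by
        rw [hbt, mul_one_add, mul_one_sub]
    _ = m ^ q * ((1 + t) ^ q + (1 - t) ^ q) := by
        rw [mul_rpow hm.le (by linarith), mul_rpow hm.le (by linarith), mul_add]
    _ ≤ m ^ q * (2 * (1 + 9 * q * t ^ 2) ^ (q / 2)) := by
        gcongr
        exact one_add_rpow_add_one_sub_rpow_le hq ht₀ ht₁
    _ = 2 * (m ^ 2 + 9 * q * b ^ 2) ^ (q / 2) := by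
        rw [hbt, ← sq_rpow_div_two hm.le q, mul_left_comm,
          ← mul_rpow (by positivity) (by positivity)]
        ring_nf

theorem ConvexOn.map_add_add_map_sub_le {s : Set ℝ} {f : ℝ → ℝ} (hf : ConvexOn ℝ s f)
    {m d e : ℝ} (hd₁ : m - d ∈ s) (hd₂ : m + d ∈ s) (he : |e| ≤ d) :
    f (m + e) + f (m - e) ≤ f (m + d) + f (m - d) := by
  obtain rfl | hd := (abs_nonneg e |>.trans he).eq_or_lt
  · rw [abs_nonpos_iff.1 he]
  -- `m ± e` are the convex combinations of `m + d` and `m - d` with swapped weights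
  set l := (d + e) / (2 * d)
  have hl : l * (2 * d) = d + e := div_mul_cancel₀ _ (by positivity)
  have hl₀ : 0 ≤ l := div_nonneg (by linarith [neg_abs_le e]) (by positivity)
  have hl₁ : 0 ≤ 1 - l := by
    rw [sub_nonneg, div_le_one (by positivity)]; linarith [le_abs_self e]
  have h₁ := hf.2 hd₂ hd₁ hl₀ hl₁ (add_sub_cancel l 1)
  have h₂ := hf.2 hd₁ hd₂ hl₀ hl₁ (add_sub_cancel l 1)
  simp only [smul_eq_mul] at h₁ h₂
  rw [show l * (m + d) + (1 - l) * (m - d) = m + e by linear_combination hl] at h₁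
  rw [show l * (m - d) + (1 - l) * (m + d) = m - e by linear_combination -hl] at h₂
  linarith

theorem rpow_add_rpow_le_of_abs_sub_le {p A B b M : ℝ} (hp : 1 ≤ p) (hAB : |A - B| ≤ 2 * b)
    (hb : 2 * b ≤ A + B) (hM : A + B ≤ 2 * M) :
    A ^ p + B ^ p ≤ (M + b) ^ p + (M - b) ^ p := by
  set m := (A + B) / 2 with hm
  have hb₀ : 0 ≤ b := by linarith [abs_nonneg (A - B)]
  have hmb : 0 ≤ m - b := by linarith
  calc A ^ p + B ^ p = (m + (A - B) / 2) ^ p + (m - (A - B) / 2) ^ p := by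
        congr 2 <;> ring
    _ ≤ (m + b) ^ p + (m - b) ^ p :=
        (convexOn_rpow hp).map_add_add_map_sub_le hmb (by simp only [Set.mem_Ici]; linarith)
          (by rw [abs_div, abs_two]; linarith)
    _ ≤ (M + b) ^ p + (M - b) ^ p := by
        gcongr <;> linarith

theorem two_mul_rpow_sub_rpow_le {p u v : ℝ} (hp : 1 ≤ p) (hu : 0 ≤ u) (huv : u ≤ v) :
    2 * v ^ p - u ^ p ≤ (2 * v - u) ^ p := by
  have h := (convexOn_rpow hp).map_add_add_map_sub_le (m := v) (d := v - u) (e := 0)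
    (by simpa using hu) (by simp only [Set.mem_Ici]; linarith) (by simpa using huv)
  rw [add_zero, sub_zero, sub_sub_cancel, show v + (v - u) = 2 * v - u by ring] at h
  linarith

namespace MeasureTheory

variable {Ω E : Type*} [MeasurableSpace Ω] {μ : Measure Ω} [NormedAddCommGroup E]

theorem integral_norm_add_rpow_rpow_inv_le {p : ℝ} (hp : 1 ≤ p) {f g : Ω → E}
    (hf : MemLp f (ENNReal.ofReal p) μ) (hg : MemLp g (ENNReal.ofReal p) μ) :
    (∫ ω, ‖f ω + g ω‖ ^ p ∂μ) ^ p⁻¹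
      ≤ (∫ ω, ‖f ω‖ ^ p ∂μ) ^ p⁻¹ + (∫ ω, ‖g ω‖ ^ p ∂μ) ^ p⁻¹ := by
  have hp₀ : ENNReal.ofReal p ≠ 0 := (ENNReal.ofReal_pos.2 (by linarith)).ne'
  have h := eLpNorm_add_le hf.1 hg.1 (ENNReal.one_le_ofReal.2 hp)
  rwa [(hf.add hg).eLpNorm_eq_integral_rpow_norm hp₀ ENNReal.ofReal_ne_top,
    hf.eLpNorm_eq_integral_rpow_norm hp₀ ENNReal.ofReal_ne_top,
    hg.eLpNorm_eq_integral_rpow_norm hp₀ ENNReal.ofReal_ne_top,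
    ENNReal.toReal_ofReal (by linarith), ← ENNReal.ofReal_add (by positivity) (by positivity),
    ENNReal.ofReal_le_ofReal_iff (by positivity)] at h

theorem MemLp.norm_sq {f : Ω → E} {q : ℝ} (hf : MemLp f (ENNReal.ofReal q) μ) :
    MemLp (fun ω => ‖f ω‖ ^ 2) (ENNReal.ofReal (q / 2)) μ := by
  have h := hf.norm_rpow_div 2
  rw [ENNReal.ofReal_div_of_pos two_pos, ENNReal.ofReal_ofNat]
  simpa using h

theorem MemLp.integrable_norm_rpow_ofReal {f : Ω → E} {p : ℝ} (hf : MemLp f (ENNReal.ofReal p) μ)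
    (hp : 0 < p) : Integrable (fun ω => ‖f ω‖ ^ p) μ := by
  simpa [ENNReal.toReal_ofReal hp.le] using
    hf.integrable_norm_rpow (ENNReal.ofReal_pos.2 hp).ne' ENNReal.ofReal_ne_top

end MeasureTheory

/-- `ρ_X(τ) ≤ s τ²` for all `τ > 0`, with the modulus of uniform smoothness `ρ_X` unfolded. -/
def HasSmoothnessModulusLE (X : Type*) [NormedAddCommGroup X] [NormedSpace ℝ X] (s : ℝ) : Prop :=
  ∀ τ : ℝ, 0 < τ → ∀ x y : X, ‖x‖ = 1 → ‖y‖ = 1 →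
    (‖x + τ • y‖ + ‖x - τ • y‖) / 2 - 1 ≤ s * τ ^ 2

namespace HasSmoothnessModulusLE

variable {X Ω : Type*} [NormedAddCommGroup X] [NormedSpace ℝ X] [MeasurableSpace Ω]
  {μ : Measure Ω} {s q : ℝ}

theorem norm_mul_norm_add_add_norm_sub_le (hX : HasSmoothnessModulusLE X s) {x : X}
    (hx : x ≠ 0) (y : X) :
    ‖x‖ * (‖x + y‖ + ‖x - y‖) ≤ 2 * ‖x‖ ^ 2 + 2 * s * ‖y‖ ^ 2 := by
  obtain rfl | hy := eq_or_ne y 0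
  · simp only [add_zero, sub_zero, norm_zero]; nlinarith
  have ha := norm_pos_iff.2 hx
  have hb := norm_pos_iff.2 hy
  set τ := ‖y‖ / ‖x‖
  have hτ : ‖x‖ * τ = ‖y‖ := mul_div_cancel₀ _ ha.ne'
  -- `x ± y = ‖x‖ • (u ± τ • v)` with unit vectors `u = x / ‖x‖`, `v = y / ‖y‖`
  have hscale : ∀ c : ℝ, ‖x + c • y‖ = ‖x‖ * ‖‖x‖⁻¹ • x + (c * τ) • (‖y‖⁻¹ • y)‖ := by
    intro c
    have hcoef : ‖x‖ * (c * τ) * ‖y‖⁻¹ = c := by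
      rw [mul_left_comm, hτ, mul_assoc, mul_inv_cancel₀ hb.ne', mul_one]
    rw [← norm_norm x, ← norm_smul, norm_norm, smul_add, smul_inv_smul₀ ha.ne', smul_smul,
      smul_smul, hcoef]
  have key := hX τ (by positivity) _ _ (norm_smul_inv_norm (𝕜 := ℝ) hx)
    (norm_smul_inv_norm (𝕜 := ℝ) hy)
  have h₁ := hscale 1
  have h₂ := hscale (-1)
  simp only [one_smul, one_mul, neg_smul, neg_mul, ← sub_eq_add_neg] at h₁ h₂
  rw [h₁, h₂]
  have hτsq : ‖x‖ ^ 2 * τ ^ 2 = ‖y‖ ^ 2 := by rw [← mul_pow, hτ]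
  linear_combination (2 * ‖x‖ ^ 2) * key + 2 * s * hτsq

theorem norm_add_rpow_add_norm_sub_rpow_le (hX : HasSmoothnessModulusLE X s) (hs : 0 ≤ s)
    (hq : 2 ≤ q) (x y : X) :
    ‖x + y‖ ^ q + ‖x - y‖ ^ q ≤ 2 * (‖x‖ ^ 2 + 32 * (s + q) * ‖y‖ ^ 2) ^ (q / 2) := by
  set a := ‖x‖
  set b := ‖y‖
  have hb : 0 ≤ b := norm_nonneg y
  have hdiff : (x + y) - (x - y) = (2 : ℝ) • y := by module
  have hAB : |‖x + y‖ - ‖x - y‖| ≤ 2 * b := by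
    simpa [hdiff, norm_smul] using abs_norm_sub_norm_le (x + y) (x - y)
  have hbM : 2 * b ≤ ‖x + y‖ + ‖x - y‖ := by
    simpa [hdiff, norm_smul] using norm_sub_le (x + y) (x - y)
  obtain ⟨M, hM, hMsq⟩ : ∃ M, ‖x + y‖ + ‖x - y‖ ≤ 2 * M ∧
      M ^ 2 + 9 * q * b ^ 2 ≤ a ^ 2 + 32 * (s + q) * b ^ 2 := by
    by_cases hab : a ≤ 2 * b ∨ a ≤ s * b
    · refine ⟨a + b, by linarith [norm_add_le x y, norm_sub_le x y], ?_⟩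
      rcases hab with hab | hab <;> nlinarith
    push Not at hab
    have ha : 0 < a := by linarith
    -- smoothness improves the triangle inequality to `‖x + y‖ + ‖x - y‖ ≤ 2 (a + s b² / a)`
    set c := s * b ^ 2 / a
    have hac : a * c = s * b ^ 2 := mul_div_cancel₀ _ ha.ne'
    have hc : 0 ≤ c := by positivity
    have hcb : c ≤ b := by
      rw [div_le_iff₀ ha]; nlinarith
    refine ⟨a + c, ?_, by nlinarith⟩
    have hsmooth := hX.norm_mul_norm_add_add_norm_sub_le (norm_pos_iff.1 ha) y
    exact le_of_mul_le_mul_left (by linarith) ha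
  calc ‖x + y‖ ^ q + ‖x - y‖ ^ q ≤ (M + b) ^ q + (M - b) ^ q :=
        rpow_add_rpow_le_of_abs_sub_le (by linarith) hAB hbM hM
    _ ≤ 2 * (M ^ 2 + 9 * q * b ^ 2) ^ (q / 2) := add_rpow_add_sub_rpow_le hq hb (by linarith)
    _ ≤ 2 * (a ^ 2 + 32 * (s + q) * b ^ 2) ^ (q / 2) := by gcongr

theorem rpow_integral_norm_add_rpow_le (hX : HasSmoothnessModulusLE X s) (hs : 0 ≤ s)
    (hq : 2 ≤ q) {Y Z : Ω → X} (hY : MemLp Y (ENNReal.ofReal q) μ)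
    (hZ : MemLp Z (ENNReal.ofReal q) μ)
    (hYZ : ∫ ω, ‖Y ω‖ ^ q ∂μ ≤ ∫ ω, ‖Y ω - Z ω‖ ^ q ∂μ) :
    (∫ ω, ‖Y ω + Z ω‖ ^ q ∂μ) ^ (2 / q)
      ≤ (∫ ω, ‖Y ω‖ ^ q ∂μ) ^ (2 / q) + 64 * (s + q) * (∫ ω, ‖Z ω‖ ^ q ∂μ) ^ (2 / q) := by
  have hq₀ : 0 < q := by linarith
  set K := 32 * (s + q)
  have hK₀ : 0 ≤ K := by positivity
  set U := (∫ ω, ‖Y ω‖ ^ q ∂μ) ^ (2 / q)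
  set V := K * (∫ ω, ‖Z ω‖ ^ q ∂μ) ^ (2 / q)
  have hU : U ^ (q / 2) = ∫ ω, ‖Y ω‖ ^ q ∂μ := by
    rw [← rpow_mul (by positivity), show 2 / q * (q / 2) = 1 by field_simp, rpow_one]
  have hminkowski : ∫ ω, (‖Y ω‖ ^ 2 + K * ‖Z ω‖ ^ 2) ^ (q / 2) ∂μ ≤ (U + V) ^ (q / 2) := by
    have h := integral_norm_add_rpow_rpow_inv_le (p := q / 2) (by linarith) hY.norm_sq
      (hZ.norm_sq.const_mul K)
    simp (disch := positivity) only [Real.norm_of_nonneg, mul_rpow, sq_rpow_div_two,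
      integral_const_mul] at h
    rwa [rpow_inv_le_iff_of_pos (by positivity) (by positivity) (by positivity), inv_div,
      ← rpow_mul hK₀, show q / 2 * (2 / q) = 1 by field_simp, rpow_one] at h
  have hsum : ∫ ω, ‖Y ω + Z ω‖ ^ q ∂μ + ∫ ω, ‖Y ω - Z ω‖ ^ q ∂μ
      ≤ 2 * ∫ ω, (‖Y ω‖ ^ 2 + K * ‖Z ω‖ ^ 2) ^ (q / 2) ∂μ := by
    have hF : Integrable (fun ω => (‖Y ω‖ ^ 2 + K * ‖Z ω‖ ^ 2) ^ (q / 2)) μ := by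
      simpa (disch := positivity) only [Pi.add_apply, Real.norm_of_nonneg] using
        (hY.norm_sq.add (hZ.norm_sq.const_mul K)).integrable_norm_rpow_ofReal (by linarith)
    have hplus : Integrable (fun ω => ‖Y ω + Z ω‖ ^ q) μ :=
      (hY.add hZ).integrable_norm_rpow_ofReal hq₀
    have hminus : Integrable (fun ω => ‖Y ω - Z ω‖ ^ q) μ :=
      (hY.sub hZ).integrable_norm_rpow_ofReal hq₀
    calc _ = ∫ ω, (‖Y ω + Z ω‖ ^ q + ‖Y ω - Z ω‖ ^ q) ∂μ := (integral_add hplus hminus).symm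
      _ ≤ ∫ ω, 2 * (‖Y ω‖ ^ 2 + K * ‖Z ω‖ ^ 2) ^ (q / 2) ∂μ :=
        integral_mono (hplus.add hminus) (hF.const_mul 2)
          fun ω => hX.norm_add_rpow_add_norm_sub_rpow_le hs hq (Y ω) (Z ω)
      _ = _ := integral_const_mul _ _
  have hpow : ∫ ω, ‖Y ω + Z ω‖ ^ q ∂μ ≤ (U + 2 * V) ^ (q / 2) :=
    calc ∫ ω, ‖Y ω + Z ω‖ ^ q ∂μ ≤ 2 * (U + V) ^ (q / 2) - U ^ (q / 2) := by linarith
      _ ≤ (2 * (U + V) - U) ^ (q / 2) :=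
        two_mul_rpow_sub_rpow_le (by linarith) (by positivity)
          (by linarith [show 0 ≤ V by positivity])
      _ = (U + 2 * V) ^ (q / 2) := by ring_nf
  calc (∫ ω, ‖Y ω + Z ω‖ ^ q ∂μ) ^ (2 / q) ≤ ((U + 2 * V) ^ (q / 2)) ^ (2 / q) := by
        gcongr
    _ = U + 64 * (s + q) * (∫ ω, ‖Z ω‖ ^ q ∂μ) ^ (2 / q) := by
        rw [← rpow_mul (by positivity), show q / 2 * (2 / q) = 1 by field_simp, rpow_one]
        ring

theorem rpow_integral_norm_sum_rpow_le (hX : HasSmoothnessModulusLE X s) (hs : 0 ≤ s)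
    (hq : 2 ≤ q) {Z : ℕ → Ω → X} (hZ : ∀ n, MemLp (Z n) (ENNReal.ofReal q) μ)
    (h : ∀ n : ℕ, 1 ≤ n →
      ∫ ω, ‖∑ i ∈ Finset.Icc 1 n, Z i ω‖ ^ q ∂μ
        ≤ ∫ ω, ‖(∑ i ∈ Finset.Icc 1 n, Z i ω) - Z (n + 1) ω‖ ^ q ∂μ) (n : ℕ) :
    (∫ ω, ‖∑ i ∈ Finset.Icc 1 n, Z i ω‖ ^ q ∂μ) ^ (2 / q)
      ≤ 64 * (s + q) * ∑ j ∈ Finset.Icc 1 n, (∫ ω, ‖Z j ω‖ ^ q ∂μ) ^ (2 / q) := by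
  have hq₀ : 0 < q := by linarith
  induction n with
  | zero => simp [zero_rpow hq₀.ne', zero_rpow (div_pos two_pos hq₀).ne']
  | succ n ih =>
    -- the hypothesis at `n = 0` holds trivially, the empty sum being `0`
    have hn : ∫ ω, ‖∑ i ∈ Finset.Icc 1 n, Z i ω‖ ^ q ∂μ
        ≤ ∫ ω, ‖(∑ i ∈ Finset.Icc 1 n, Z i ω) - Z (n + 1) ω‖ ^ q ∂μ := by
      rcases Nat.eq_zero_or_pos n with rfl | hn
      · simpa [zero_rpow hq₀.ne'] using integral_nonneg fun ω => by positivity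
      · exact h n hn
    have hstep := hX.rpow_integral_norm_add_rpow_le hs hq
      (memLp_finsetSum _ fun i _ => hZ i) (hZ (n + 1)) hn
    simp only [Finset.sum_Icc_succ_top (Nat.le_add_left 1 n)]
    linarith

end HasSmoothnessModulusLE

theorem stmt6_general {X : Type*} [NormedAddCommGroup X] [NormedSpace ℝ X]
    {Ω : Type*} [MeasurableSpace Ω] (μ : Measure Ω)
    (s q : ℝ) (hs : 0 < s) (hq : 2 ≤ q)
    (hρ : ∀ τ : ℝ, 0 < τ → ∀ x y : X, ‖x‖ = 1 → ‖y‖ = 1 →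
      (‖x + τ • y‖ + ‖x - τ • y‖) / 2 - 1 ≤ s * τ ^ 2)
    (Z : ℕ → Ω → X)
    (hmeas : ∀ n, AEStronglyMeasurable (Z n) μ)
    (hint : ∀ n, Integrable (fun ω => ‖Z n ω‖ ^ q) μ)
    (h : ∀ n : ℕ, 1 ≤ n →
      ∫ ω, ‖∑ i ∈ Finset.Icc 1 n, Z i ω‖ ^ q ∂μ
        ≤ ∫ ω, ‖(∑ i ∈ Finset.Icc 1 n, Z i ω) - Z (n + 1) ω‖ ^ q ∂μ)
    (n : ℕ) :
    (∫ ω, ‖∑ i ∈ Finset.Icc 1 n, Z i ω‖ ^ q ∂μ) ^ (1 / q)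
      ≤ 8 * Real.sqrt (s + q) *
        Real.sqrt (∑ j ∈ Finset.Icc 1 n, (∫ ω, ‖Z j ω‖ ^ q ∂μ) ^ (2 / q)) := by
  have hq₀ : 0 < q := by linarith
  have hZ : ∀ n, MemLp (Z n) (ENNReal.ofReal q) μ := fun n =>
    (integrable_norm_rpow_iff (hmeas n) (ENNReal.ofReal_pos.2 hq₀).ne' ENNReal.ofReal_ne_top).1
      (by simpa [ENNReal.toReal_ofReal hq₀.le] using hint n)
  have hsum := HasSmoothnessModulusLE.rpow_integral_norm_sum_rpow_le hρ hs.le hq hZ h n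
  calc (∫ ω, ‖∑ i ∈ Finset.Icc 1 n, Z i ω‖ ^ q ∂μ) ^ (1 / q)
      = √((∫ ω, ‖∑ i ∈ Finset.Icc 1 n, Z i ω‖ ^ q ∂μ) ^ (2 / q)) := by
        rw [sqrt_eq_rpow, ← rpow_mul (integral_nonneg fun ω => by positivity)]
        ring_nf
    _ ≤ √(64 * (s + q) * ∑ j ∈ Finset.Icc 1 n, (∫ ω, ‖Z j ω‖ ^ q ∂μ) ^ (2 / q)) :=
        sqrt_le_sqrt hsum
    _ = 8 * √(s + q) * √(∑ j ∈ Finset.Icc 1 n, (∫ ω, ‖Z j ω‖ ^ q ∂μ) ^ (2 / q)) := by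
        rw [sqrt_mul (by positivity), sqrt_mul (by norm_num),
          show (64 : ℝ) = 8 ^ 2 by norm_num, sqrt_sq (by norm_num)]

theorem stmt6 {X : Type*} [NormedAddCommGroup X] [NormedSpace ℝ X]
    {Ω : Type*} [MeasurableSpace Ω] (μ : Measure Ω) [IsProbabilityMeasure μ]
    (s q : ℝ) (hs : 0 < s) (hq : 2 ≤ q)
    (hρ : ∀ τ : ℝ, 0 < τ → ∀ x y : X, ‖x‖ = 1 → ‖y‖ = 1 →
      (‖x + τ • y‖ + ‖x - τ • y‖) / 2 - 1 ≤ s * τ ^ 2)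
    (Z : ℕ → Ω → X)
    (hmeas : ∀ n, AEStronglyMeasurable (Z n) μ)
    (hint : ∀ n, Integrable (fun ω => ‖Z n ω‖ ^ q) μ)
    (h : ∀ n : ℕ, 1 ≤ n →
      ∫ ω, ‖∑ i ∈ Finset.Icc 1 n, Z i ω‖ ^ q ∂μ
        ≤ ∫ ω, ‖(∑ i ∈ Finset.Icc 1 n, Z i ω) - Z (n + 1) ω‖ ^ q ∂μ)
    (n : ℕ) (hn : 1 ≤ n) :
    (∫ ω, ‖∑ i ∈ Finset.Icc 1 n, Z i ω‖ ^ q ∂μ) ^ (1 / q)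
      ≤ 8 * Real.sqrt (s + q) *
        Real.sqrt (∑ j ∈ Finset.Icc 1 n, (∫ ω, ‖Z j ω‖ ^ q ∂μ) ^ (2 / q)) :=
  stmt6_general μ s q hs hq hρ Z hmeas hint h n
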